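/- arXiv:2105.10879 — 6 statements merged into one kernel-verified Lean document; each statement's English description precedes it below -/
import Mathlib

section
/- Let α > 0 and let m : ℝ → ℝ → ℝ satisfy |m(a,b) − max(a,b)| ≤ 2^{−α} for all a, b ∈ [0,1]. Define the family M_n : ℝⁿ → ℝ recursively by M_1(x_1) = x_1, M_{2k}(x_1,…,x_{2k}) = m(M_k(x_1,…,x_k), M_k(x_{k+1},…,x_{2k})), and M_{2k+1}(x_1,…,x_{2k+1}) = m(M_k(x_1,…,x_k), M_{k+1}(x_{k+1},…,x_{2k+1})). Then for every n ∈ ℕ with n ≥ 1 and all x_1,…,x_n ∈ [(⌈log₂ n⌉ − 1)·2^{−α}, 1 − (⌈log₂ n⌉ − 1)·2^{−α}], we have |M_n(x_1,…,x_n) − max(x_1,…,x_n)| ≤ 2^{−α}·⌈log₂ n⌉. -/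
/-- The `n`-variable approximate maximum built from a two-variable approximate
max function `m` by binary recursion: `M_1(x_1) = x_1`,
`M_{2k}(x) = m(M_k(first k), M_k(last k))`, and
`M_{2k+1}(x) = m(M_k(first k), M_{k+1}(last k+1))`. -/
noncomputable def approxMax (m : ℝ → ℝ → ℝ) : (n : ℕ) → (Fin n → ℝ) → ℝ
  | 0, _ => 0
  | 1, x => x 0
  | (n + 2), x =>
      m (approxMax m ((n + 2) / 2) (fun i => x ⟨i.val, by omega⟩))
        (approxMax m ((n + 2) - (n + 2) / 2)
          (fun i => x ⟨(n + 2) / 2 + i.val, by omega⟩))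
  termination_by n => n
  decreasing_by all_goals omega

/-- pure-arithmetic combination step -/
lemma approxMax_combine (ε : ℝ) (hε : 0 ≤ ε) (m : ℝ → ℝ → ℝ)
    (hm : ∀ a b : ℝ, a ∈ Set.Icc (0:ℝ) 1 → b ∈ Set.Icc (0:ℝ) 1 → |m a b - max a b| ≤ ε)
    (L : ℝ) (hL1 : 1 ≤ L) (A B sL sR : ℝ)
    (hA : |A - sL| ≤ ε * (L - 1)) (hB : |B - sR| ≤ ε * (L - 1))
    (hsL : sL ∈ Set.Icc ((L - 1) * ε) (1 - (L - 1) * ε))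
    (hsR : sR ∈ Set.Icc ((L - 1) * ε) (1 - (L - 1) * ε)) :
    |m A B - max sL sR| ≤ ε * L := by
  have hAmem : A ∈ Set.Icc (0:ℝ) 1 := by
    rw [abs_le] at hA
    constructor <;> nlinarith [hsL.1, hsL.2, hA.1, hA.2]
  have hBmem : B ∈ Set.Icc (0:ℝ) 1 := by
    rw [abs_le] at hB
    constructor <;> nlinarith [hsR.1, hsR.2, hB.1, hB.2]
  have h1 : |m A B - max A B| ≤ ε := hm A B hAmem hBmem
  have h2 : |max A B - max sL sR| ≤ max |A - sL| |B - sR| := abs_max_sub_max_le_max _ _ _ _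
  have h3 : max |A - sL| |B - sR| ≤ ε * (L - 1) := max_le hA hB
  calc |m A B - max sL sR| ≤ |m A B - max A B| + |max A B - max sL sR| := abs_sub_le _ _ _
    _ ≤ ε + ε * (L - 1) := add_le_add h1 (le_trans h2 h3)
    _ = ε * L := by ring

lemma approxMax_key (ε : ℝ) (hε : 0 ≤ ε) (m : ℝ → ℝ → ℝ)
    (hm : ∀ a b : ℝ, a ∈ Set.Icc (0:ℝ) 1 → b ∈ Set.Icc (0:ℝ) 1 → |m a b - max a b| ≤ ε) :
    ∀ n : ℕ, 1 ≤ n → ∀ x : Fin n → ℝ,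
      (∀ i, x i ∈ Set.Icc (((Nat.clog 2 n : ℝ) - 1) * ε) (1 - ((Nat.clog 2 n : ℝ) - 1) * ε)) →
      ∀ (hne : (Finset.univ : Finset (Fin n)).Nonempty),
      |approxMax m n x - Finset.univ.sup' hne x| ≤ ε * (Nat.clog 2 n : ℝ) := by
  intro n
  induction n using Nat.strong_induction_on with
  | _ n IH =>
    intro hn x hx hne
    match n, hn with
    | 1, _ =>
      have hs : Finset.univ.sup' hne x = x 0 := by
        refine le_antisymm (Finset.sup'_le _ _ fun i _ => ?_) (Finset.le_sup' x (Finset.mem_univ 0))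
        fin_cases i; exact le_refl _
      simp [approxMax, hs, Nat.clog_one_right]
    | (n + 2), _ =>
      have hk1 : 1 ≤ (n + 2) / 2 := by omega
      have hj1 : 1 ≤ (n + 2) - (n + 2) / 2 := by omega
      have hL1 : 1 ≤ Nat.clog 2 (n + 2) := Nat.clog_pos (by norm_num) (by omega)
      have hrec : Nat.clog 2 (n + 2) = Nat.clog 2 ((n + 2 + 2 - 1) / 2) + 1 :=
        Nat.clog_of_two_le (by norm_num) (by omega)
      have hjval : (n + 2 + 2 - 1) / 2 = (n + 2) - (n + 2) / 2 := by omega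
      rw [hjval] at hrec
      have hLj : Nat.clog 2 ((n + 2) - (n + 2) / 2) = Nat.clog 2 (n + 2) - 1 := by omega
      have hLk : Nat.clog 2 ((n + 2) / 2) ≤ Nat.clog 2 (n + 2) - 1 := by
        have := Nat.clog_mono_right 2 (show (n + 2) / 2 ≤ (n + 2) - (n + 2) / 2 by omega)
        omega
      have hunfold : approxMax m (n + 2) x =
          m (approxMax m ((n + 2) / 2) (fun i => x ⟨i.val, by omega⟩))
            (approxMax m ((n + 2) - (n + 2) / 2)
              (fun i => x ⟨(n + 2) / 2 + i.val, by omega⟩)) := by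
        rw [approxMax]
      rw [hunfold]
      set xL : Fin ((n + 2) / 2) → ℝ := fun i => x ⟨i.val, by omega⟩ with hxL
      set xR : Fin ((n + 2) - (n + 2) / 2) → ℝ := fun i => x ⟨(n + 2) / 2 + i.val, by omega⟩
        with hxR
      have hneL : (Finset.univ : Finset (Fin ((n + 2) / 2))).Nonempty :=
        ⟨⟨0, hk1⟩, Finset.mem_univ _⟩
      have hneR : (Finset.univ : Finset (Fin ((n + 2) - (n + 2) / 2))).Nonempty :=
        ⟨⟨0, hj1⟩, Finset.mem_univ _⟩
      have cast_le : ∀ (a : ℕ), a ≤ Nat.clog 2 (n + 2) →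
          ((a : ℝ) - 1) * ε ≤ ((Nat.clog 2 (n + 2) : ℝ) - 1) * ε := by
        intro a ha
        apply mul_le_mul_of_nonneg_right _ hε
        have : (a : ℝ) ≤ (Nat.clog 2 (n + 2) : ℝ) := Nat.cast_le.mpr ha
        linarith
      have hxL' : ∀ i, xL i ∈ Set.Icc (((Nat.clog 2 ((n + 2) / 2) : ℝ) - 1) * ε)
          (1 - ((Nat.clog 2 ((n + 2) / 2) : ℝ) - 1) * ε) := by
        intro i
        have h := hx ⟨i.val, by omega⟩
        have hle := cast_le (Nat.clog 2 ((n + 2) / 2)) (by omega)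
        exact ⟨le_trans hle h.1, le_trans h.2 (by linarith)⟩
      have hxR' : ∀ i, xR i ∈ Set.Icc (((Nat.clog 2 ((n + 2) - (n + 2) / 2) : ℝ) - 1) * ε)
          (1 - ((Nat.clog 2 ((n + 2) - (n + 2) / 2) : ℝ) - 1) * ε) := by
        intro i
        have h := hx ⟨(n + 2) / 2 + i.val, by omega⟩
        have hle := cast_le (Nat.clog 2 ((n + 2) - (n + 2) / 2)) (by omega)
        exact ⟨le_trans hle h.1, le_trans h.2 (by linarith)⟩
      have IHL := IH ((n + 2) / 2) (by omega) hk1 xL hxL' hneL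
      have IHR := IH ((n + 2) - (n + 2) / 2) (by omega) hj1 xR hxR' hneR
      have hcastL1 : ((Nat.clog 2 (n + 2) : ℝ) - 1) = ((Nat.clog 2 (n + 2) - 1 : ℕ) : ℝ) := by
        rw [Nat.cast_sub hL1]; norm_num
      have hbL : ε * (Nat.clog 2 ((n + 2) / 2) : ℝ) ≤ ε * ((Nat.clog 2 (n + 2) : ℝ) - 1) := by
        rw [hcastL1]
        exact mul_le_mul_of_nonneg_left (Nat.cast_le.mpr hLk) hε
      have hbR : ε * (Nat.clog 2 ((n + 2) - (n + 2) / 2) : ℝ) ≤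
          ε * ((Nat.clog 2 (n + 2) : ℝ) - 1) := by
        rw [hcastL1]
        exact mul_le_mul_of_nonneg_left (Nat.cast_le.mpr (le_of_eq hLj)) hε
      have hsLmem : Finset.univ.sup' hneL xL ∈
          Set.Icc (((Nat.clog 2 (n + 2) : ℝ) - 1) * ε) (1 - ((Nat.clog 2 (n + 2) : ℝ) - 1) * ε) := by
        constructor
        · exact le_trans (hx ⟨0, by omega⟩).1 (Finset.le_sup' xL (Finset.mem_univ ⟨0, hk1⟩))
        · exact Finset.sup'_le _ _ fun i _ => (hx ⟨i.val, by omega⟩).2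
      have hsRmem : Finset.univ.sup' hneR xR ∈
          Set.Icc (((Nat.clog 2 (n + 2) : ℝ) - 1) * ε) (1 - ((Nat.clog 2 (n + 2) : ℝ) - 1) * ε) := by
        constructor
        · exact le_trans (hx ⟨(n + 2) / 2 + 0, by omega⟩).1
            (Finset.le_sup' xR (Finset.mem_univ ⟨0, hj1⟩))
        · exact Finset.sup'_le _ _ fun i _ => (hx ⟨(n + 2) / 2 + i.val, by omega⟩).2
      have hsplit : Finset.univ.sup' hne x =
          max (Finset.univ.sup' hneL xL) (Finset.univ.sup' hneR xR) := by
        apply le_antisymm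
        · apply Finset.sup'_le
          intro i _
          by_cases h : i.val < (n + 2) / 2
          · have hi : x i = xL ⟨i.val, h⟩ := rfl
            rw [hi]
            exact le_max_of_le_left (Finset.le_sup' xL (Finset.mem_univ _))
          · have hi : x i = xR ⟨i.val - (n + 2) / 2, by omega⟩ := by
              rw [hxR]; congr 1; exact Fin.ext (by simp; omega)
            rw [hi]
            exact le_max_of_le_right (Finset.le_sup' xR (Finset.mem_univ _))
        · apply max_le
          · exact Finset.sup'_le _ _ fun i _ =>
              Finset.le_sup' x (Finset.mem_univ ⟨i.val, by omega⟩)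
          · exact Finset.sup'_le _ _ fun i _ =>
              Finset.le_sup' x (Finset.mem_univ ⟨(n + 2) / 2 + i.val, by omega⟩)
      rw [hsplit]
      exact approxMax_combine ε hε m hm (Nat.clog 2 (n + 2) : ℝ) (by exact_mod_cast hL1)
        _ _ _ _ (le_trans IHL hbL) (le_trans IHR hbR) hsLmem hsRmem

/-- Error bound for the approximate `n`-ary max: if each input lies in
`[(⌈log₂ n⌉-1)·2^(-α), 1-(⌈log₂ n⌉-1)·2^(-α)]`, then `M_n` differs from the true
maximum by at most `2^(-α)·⌈log₂ n⌉`. -/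
theorem approxMax_error (α : ℝ) (hα : 0 < α) (m : ℝ → ℝ → ℝ)
    (hm : ∀ a b : ℝ, a ∈ Set.Icc (0 : ℝ) 1 → b ∈ Set.Icc (0 : ℝ) 1 →
      |m a b - max a b| ≤ 2 ^ (-α))
    (n : ℕ) (hn : 1 ≤ n) (x : Fin n → ℝ)
    (hx : ∀ i, x i ∈ Set.Icc (((Nat.clog 2 n : ℝ) - 1) * 2 ^ (-α))
      (1 - ((Nat.clog 2 n : ℝ) - 1) * 2 ^ (-α))) :
    |approxMax m n x - Finset.univ.sup' ⟨⟨0, hn⟩, Finset.mem_univ _⟩ x| ≤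
      2 ^ (-α) * (Nat.clog 2 n : ℝ) := by
  have hε : (0:ℝ) ≤ 2 ^ (-α) := le_of_lt (Real.rpow_pos_of_pos (by norm_num) _)
  exact approxMax_key (2 ^ (-α)) hε m hm n hn x hx _
end

section
/- Let α > 0 and let m : ℝ → ℝ → ℝ satisfy |m(a,b) − max(a,b)| ≤ 2^{−α} for all a, b ∈ [0,1]. Define M_n by the binary recursion M_1(x_1) = x_1, M_{2k}(x_1,…,x_{2k}) = m(M_k(x_1,…,x_k), M_k(x_{k+1},…,x_{2k})), M_{2k+1}(x_1,…,x_{2k+1}) = m(M_k(x_1,…,x_k), M_{k+1}(x_{k+1},…,x_{2k+1})). Then for every n ≥ 1 and all real numbers A, B with (⌈log₂ n⌉ − 1)·2^{−α} ≤ A < B ≤ 1 − (⌈log₂ n⌉ − 1)·2^{−α}, if x_1,…,x_n ∈ [A, B], then M_n(x_1,…,x_n) ∈ [A − ⌈log₂ n⌉·2^{−α}, B + ⌈log₂ n⌉·2^{−α}]. -/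
theorem approxMax_rec (m : ℝ → ℝ → ℝ) (k : ℕ) (x : Fin (k+2) → ℝ) :
    approxMax m (k+2) x =
      m (approxMax m ((k + 2) / 2) (fun i => x ⟨i.val, by omega⟩))
        (approxMax m ((k + 2) - (k + 2) / 2)
          (fun i => x ⟨(k + 2) / 2 + i.val, by omega⟩)) := by
  rw [approxMax]


/-- Range stability of the approximate `n`-ary max: if
`(⌈log₂ n⌉-1)·2^(-α) ≤ A < B ≤ 1-(⌈log₂ n⌉-1)·2^(-α)` and all inputs lie in
`[A, B]`, then `M_n` lies in `[A - ⌈log₂ n⌉·2^(-α), B + ⌈log₂ n⌉·2^(-α)]`. -/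
theorem approxMax_range (α : ℝ) (hα : 0 < α) (m : ℝ → ℝ → ℝ)
    (hm : ∀ a b : ℝ, a ∈ Set.Icc (0 : ℝ) 1 → b ∈ Set.Icc (0 : ℝ) 1 →
      |m a b - max a b| ≤ 2 ^ (-α))
    (n : ℕ) (hn : 1 ≤ n) (A B : ℝ)
    (hA : ((Nat.clog 2 n : ℝ) - 1) * 2 ^ (-α) ≤ A) (hAB : A < B)
    (hB : B ≤ 1 - ((Nat.clog 2 n : ℝ) - 1) * 2 ^ (-α))
    (x : Fin n → ℝ) (hx : ∀ i, x i ∈ Set.Icc A B) :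
    approxMax m n x ∈
      Set.Icc (A - (Nat.clog 2 n : ℝ) * 2 ^ (-α))
        (B + (Nat.clog 2 n : ℝ) * 2 ^ (-α)) := by
  have hε : (0:ℝ) < 2 ^ (-α) := by positivity
  set ε : ℝ := 2 ^ (-α) with hεdef
  revert hn hA hB x hx
  induction n using Nat.strong_induction_on with
  | _ n ih =>
    intro hn x hx hA hB
    match n, hn, x, hx, hA, hB, ih with
    | 1, _, x, hx, hA, hB, ih =>
      have h := hx 0
      rw [Set.mem_Icc] at h
      simp only [approxMax, Nat.clog_one_right, Nat.cast_zero, zero_mul, sub_zero, add_zero,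
        Set.mem_Icc]
      exact ⟨h.1, h.2⟩
    | (k+2), _, x, hx, hA, hB, ih =>
      set p := (k+2)/2 with hpdef
      set q := (k+2) - (k+2)/2 with hqdef
      set L := Nat.clog 2 (k+2) with hLdef
      have hclog : L = Nat.clog 2 q + 1 := by
        have h2 : (k + 2 + 2 - 1) / 2 = q := by omega
        rw [hLdef, Nat.clog_of_two_le one_lt_two (by omega), h2]
      have hcpq : Nat.clog 2 p ≤ Nat.clog 2 q := Nat.clog_mono_right _ (by omega)
      have hcp : (Nat.clog 2 p : ℝ) ≤ (L:ℝ) - 1 := by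
        have h1 : Nat.clog 2 p + 1 ≤ L := by omega
        have := (Nat.cast_le (α := ℝ)).mpr h1
        push_cast at this; linarith
      have hcq : (Nat.clog 2 q : ℝ) ≤ (L:ℝ) - 1 := by
        have h1 : Nat.clog 2 q + 1 ≤ L := by omega
        have := (Nat.cast_le (α := ℝ)).mpr h1
        push_cast at this; linarith
      have hAp : ((Nat.clog 2 p : ℝ) - 1) * ε ≤ A := by nlinarith
      have hBp : B ≤ 1 - ((Nat.clog 2 p : ℝ) - 1) * ε := by nlinarith
      have hAq : ((Nat.clog 2 q : ℝ) - 1) * ε ≤ A := by nlinarith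
      have hBq : B ≤ 1 - ((Nat.clog 2 q : ℝ) - 1) * ε := by nlinarith
      have key : ∀ X Y : ℝ,
          A - (Nat.clog 2 p : ℝ) * ε ≤ X → X ≤ B + (Nat.clog 2 p : ℝ) * ε →
          A - (Nat.clog 2 q : ℝ) * ε ≤ Y → Y ≤ B + (Nat.clog 2 q : ℝ) * ε →
          m X Y ∈ Set.Icc (A - (L:ℝ) * ε) (B + (L:ℝ) * ε) := by
        intro X Y h1 h2 h3 h4
        have hcpe : (Nat.clog 2 p : ℝ) * ε ≤ ((L:ℝ) - 1) * ε :=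
          mul_le_mul_of_nonneg_right hcp hε.le
        have hcqe : (Nat.clog 2 q : ℝ) * ε ≤ ((L:ℝ) - 1) * ε :=
          mul_le_mul_of_nonneg_right hcq hε.le
        have hX01 : X ∈ Set.Icc (0:ℝ) 1 := ⟨by linarith, by linarith⟩
        have hY01 : Y ∈ Set.Icc (0:ℝ) 1 := ⟨by linarith, by linarith⟩
        have hmax1 : A - ((L:ℝ) - 1) * ε ≤ max X Y :=
          le_trans (by linarith) (le_max_left X Y)
        have hmax2 : max X Y ≤ B + ((L:ℝ) - 1) * ε :=
          max_le (by linarith) (by linarith)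
        have habs := hm X Y hX01 hY01
        rw [abs_le] at habs
        exact ⟨by linarith [habs.1], by linarith [habs.2]⟩
      have ha := ih p (by omega) (by omega) (fun i : Fin p => x ⟨i.1, by omega⟩)
        (fun i => hx _) hAp hBp
      have hb := ih q (by omega) (by omega) (fun i : Fin q => x ⟨p + i.1, by omega⟩)
        (fun i => hx _) hAq hBq
      rw [Set.mem_Icc] at ha hb
      rw [approxMax_rec]
      exact key _ _ ha.1 ha.2 hb.1 hb.2
end

section
/- Let α > 0, n ≥ 1, and B > 0 with 0.5 − (⌈log₂ n⌉ − 1)·2^{−α} > 0, and set B' = B / (0.5 − (⌈log₂ n⌉ − 1)·2^{−α}). Let m : ℝ → ℝ → ℝ satisfy |m(a,b) − max(a,b)| ≤ 2^{−α} for all a, b ∈ [0,1], and let M_n be defined from m by the binary recursion M_1(x_1) = x_1, M_{2k} = m(M_k(first half), M_k(second half)), M_{2k+1} = m(M_k(first k), M_{k+1}(last k+1)). Define M̃(x_1,…,x_n) = B'·(M_n(x_1/B' + 0.5, …, x_n/B' + 0.5) − 0.5). Then for all x_1,…,x_n ∈ [−B, B], |M̃(x_1,…,x_n) − max(x_1,…,x_n)|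 ≤ B'·2^{−α}·⌈log₂ n⌉. -/
set_option maxHeartbeats 1000000

lemma sup'_univ_split {n k : ℕ} (hk : 1 ≤ k) (hkn : k < n)
    (y : Fin n → ℝ) (hne : (Finset.univ : Finset (Fin n)).Nonempty)
    (hnek : (Finset.univ : Finset (Fin k)).Nonempty)
    (hnel : (Finset.univ : Finset (Fin (n - k))).Nonempty) :
    Finset.univ.sup' hne y =
      max (Finset.univ.sup' hnek (fun i : Fin k => y ⟨i.val, by omega⟩))
          (Finset.univ.sup' hnel (fun i : Fin (n - k) => y ⟨k + i.val, by omega⟩)) := by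
  apply le_antisymm
  · apply Finset.sup'_le
    intro i _
    by_cases hi : i.val < k
    · refine le_max_of_le_left ?_
      have h := Finset.le_sup' (f := fun i : Fin k => y ⟨i.val, by omega⟩)
        (Finset.mem_univ (⟨i.val, hi⟩ : Fin k))
      simpa [-Finset.le_sup'_iff] using h
    · refine le_max_of_le_right ?_
      have hik : i.val - k < n - k := by omega
      have h := Finset.le_sup' (f := fun i : Fin (n - k) => y ⟨k + i.val, by omega⟩)
        (Finset.mem_univ (⟨i.val - k, hik⟩ : Fin (n - k)))
      have he : (⟨k + (i.val - k), by omega⟩ : Fin n) = i := Fin.ext (by simp; omega)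
      simpa [he, -Finset.le_sup'_iff] using h
  · refine max_le ?_ ?_
    · exact Finset.sup'_le _ _ fun i _ => Finset.le_sup' y (Finset.mem_univ _)
    · exact Finset.sup'_le _ _ fun i _ => Finset.le_sup' y (Finset.mem_univ _)

lemma approxMax_err (α : ℝ) (hα : 0 < α) (m : ℝ → ℝ → ℝ)
    (hm : ∀ a b : ℝ, a ∈ Set.Icc (0 : ℝ) 1 → b ∈ Set.Icc (0 : ℝ) 1 →
      |m a b - max a b| ≤ 2 ^ (-α)) :
    ∀ n : ℕ, 1 ≤ n → ∀ (y : Fin n → ℝ)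
      (hne : (Finset.univ : Finset (Fin n)).Nonempty),
      (∀ i, ((Nat.clog 2 n : ℝ) - 1) * 2 ^ (-α) ≤ y i ∧
        y i ≤ 1 - ((Nat.clog 2 n : ℝ) - 1) * 2 ^ (-α)) →
      |approxMax m n y - Finset.univ.sup' hne y| ≤ (Nat.clog 2 n : ℝ) * 2 ^ (-α) := by
  have hε : (0:ℝ) < 2 ^ (-α) := by positivity
  set ε : ℝ := 2 ^ (-α) with hεdef
  intro n
  induction n using Nat.strong_induction_on with
  | _ n IH =>
  intro hn y hne hy
  rcases eq_or_lt_of_le hn with h1 | h2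
  · -- n = 1
    obtain rfl : n = 1 := h1.symm
    have heq : approxMax m 1 y = y 0 := by rw [approxMax]
    have h2 : Finset.univ.sup' hne y = y 0 := by
      apply le_antisymm
      · exact Finset.sup'_le _ _ fun i _ => by rw [Subsingleton.elim i 0]
      · exact Finset.le_sup' _ (Finset.mem_univ 0)
    simp [heq, h2, Nat.clog_one_right]
  · obtain ⟨p, rfl⟩ : ∃ p, n = p + 2 := ⟨n - 2, by omega⟩
    set k := (p + 2) / 2 with hk
    have hk1 : 1 ≤ k := by omega
    have hl1 : 1 ≤ p + 2 - k := by omega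
    have hkn : k < p + 2 := by omega
    have hln : p + 2 - k < p + 2 := by omega
    have hLnat : Nat.clog 2 (p + 2) = Nat.clog 2 (p + 2 - k) + 1 := by
      rw [Nat.clog_of_two_le (by norm_num) (by omega)]
      congr 2
      omega
    have hLk : Nat.clog 2 k ≤ Nat.clog 2 (p + 2 - k) := Nat.clog_mono_right 2 (by omega)
    set L : ℝ := (Nat.clog 2 (p + 2) : ℝ) with hLdef
    have hLl : (Nat.clog 2 (p + 2 - k) : ℝ) = L - 1 := by
      rw [hLdef, hLnat]; push_cast; ring
    have hLk' : (Nat.clog 2 k : ℝ) ≤ L - 1 := by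
      rw [← hLl]; exact_mod_cast hLk
    have hLk0 : (0:ℝ) ≤ (Nat.clog 2 k : ℝ) := Nat.cast_nonneg _
    have hL1' : (1:ℝ) ≤ L := by nlinarith
    have hnek : (Finset.univ : Finset (Fin k)).Nonempty := ⟨⟨0, hk1⟩, Finset.mem_univ _⟩
    have hnel : (Finset.univ : Finset (Fin (p + 2 - k))).Nonempty := ⟨⟨0, hl1⟩, Finset.mem_univ _⟩
    have hyf : ∀ i : Fin k, ((Nat.clog 2 k : ℝ) - 1) * ε ≤ y ⟨i.val, by omega⟩ ∧
        y ⟨i.val, by omega⟩ ≤ 1 - ((Nat.clog 2 k : ℝ) - 1) * ε := by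
      intro i
      obtain ⟨ha, hb⟩ := hy ⟨i.val, by omega⟩
      constructor
      · nlinarith
      · nlinarith
    have hyg : ∀ i : Fin (p + 2 - k), ((Nat.clog 2 (p + 2 - k) : ℝ) - 1) * ε ≤ y ⟨k + i.val, by omega⟩ ∧
        y ⟨k + i.val, by omega⟩ ≤ 1 - ((Nat.clog 2 (p + 2 - k) : ℝ) - 1) * ε := by
      intro i
      obtain ⟨ha, hb⟩ := hy ⟨k + i.val, by omega⟩
      constructor
      · nlinarith [hLl.le]
      · nlinarith [hLl.le]
    have hu := IH k hkn hk1 (fun i => y ⟨i.val, by omega⟩) hnek hyf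
    have hv := IH (p + 2 - k) hln hl1 (fun i => y ⟨k + i.val, by omega⟩) hnel hyg
    set u := approxMax m k (fun i => y ⟨i.val, by omega⟩) with hudef
    set v := approxMax m (p + 2 - k) (fun i => y ⟨k + i.val, by omega⟩) with hvdef
    set s1 := Finset.univ.sup' hnek (fun i : Fin k => y ⟨i.val, by omega⟩) with hs1
    set s2 := Finset.univ.sup' hnel (fun i : Fin (p + 2 - k) => y ⟨k + i.val, by omega⟩) with hs2
    have hu2 : |u - s1| ≤ (L - 1) * ε := hu.trans (by nlinarith)
    have hv2 : |v - s2| ≤ (L - 1) * ε := hv.trans (by rw [hLl])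
    have hs1b : (L - 1) * ε ≤ s1 ∧ s1 ≤ 1 - (L - 1) * ε := by
      constructor
      · exact le_trans (hy ⟨0, by omega⟩).1
          (Finset.le_sup' (f := fun i : Fin k => y ⟨i.val, by omega⟩) (Finset.mem_univ ⟨0, hk1⟩))
      · exact Finset.sup'_le _ _ fun i _ => (hy ⟨i.val, by omega⟩).2
    have hs2b : (L - 1) * ε ≤ s2 ∧ s2 ≤ 1 - (L - 1) * ε := by
      constructor
      · exact le_trans (hy ⟨k + 0, by omega⟩).1
          (Finset.le_sup' (f := fun i : Fin (p + 2 - k) => y ⟨k + i.val, by omega⟩)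
            (Finset.mem_univ ⟨0, hl1⟩))
      · exact Finset.sup'_le _ _ fun i _ => (hy ⟨k + i.val, by omega⟩).2
    have hu01 : u ∈ Set.Icc (0:ℝ) 1 := by
      have := abs_le.mp hu2
      constructor <;> nlinarith [hs1b.1, hs1b.2]
    have hv01 : v ∈ Set.Icc (0:ℝ) 1 := by
      have := abs_le.mp hv2
      constructor <;> nlinarith [hs2b.1, hs2b.2]
    have hsup : Finset.univ.sup' hne y = max s1 s2 :=
      sup'_univ_split hk1 hkn y hne hnek hnel
    have hunfold : approxMax m (p + 2) y = m u v := by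
      rw [approxMax]
    have hmax : |max u v - max s1 s2| ≤ (L - 1) * ε :=
      (abs_max_sub_max_le_max u v s1 s2).trans (max_le hu2 hv2)
    have hmuv := hm u v hu01 hv01
    calc |approxMax m (p + 2) y - Finset.univ.sup' hne y|
        = |(m u v - max u v) + (max u v - max s1 s2)| := by
          rw [hunfold, hsup]; ring_nf
      _ ≤ |m u v - max u v| + |max u v - max s1 s2| := abs_add_le _ _
      _ ≤ ε + (L - 1) * ε := add_le_add hmuv hmax
      _ = L * ε := by ring

/-- Error bound for the affinely rescaled approximate max-pooling
`M̃(x) = B'·(M_n(x/B' + 0.5) − 0.5)` on the extended range `[-B, B]`, where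
`B' = B / (0.5 − (⌈log₂ n⌉ − 1)·2^(-α))`. -/
theorem approxMax_rescaled_error (α B : ℝ) (hα : 0 < α) (hB : 0 < B)
    (n : ℕ) (hn : 1 ≤ n)
    (hpos : 0 < 0.5 - ((Nat.clog 2 n : ℝ) - 1) * 2 ^ (-α))
    (B' : ℝ) (hB' : B' = B / (0.5 - ((Nat.clog 2 n : ℝ) - 1) * 2 ^ (-α)))
    (m : ℝ → ℝ → ℝ)
    (hm : ∀ a b : ℝ, a ∈ Set.Icc (0 : ℝ) 1 → b ∈ Set.Icc (0 : ℝ) 1 →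
      |m a b - max a b| ≤ 2 ^ (-α))
    (x : Fin n → ℝ) (hx : ∀ i, x i ∈ Set.Icc (-B) B) :
    |B' * (approxMax m n (fun i => x i / B' + 0.5) - 0.5) -
        Finset.univ.sup' ⟨⟨0, hn⟩, Finset.mem_univ _⟩ x| ≤
      B' * 2 ^ (-α) * (Nat.clog 2 n : ℝ) := by
  have hε : (0:ℝ) < 2 ^ (-α) := by positivity
  have hB'pos : 0 < B' := hB' ▸ div_pos hB hpos
  set c : ℝ := ((Nat.clog 2 n : ℝ) - 1) * 2 ^ (-α) with hc
  have hBB' : B / B' = 0.5 - c := by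
    rw [hB']
    field_simp
  have hne : (Finset.univ : Finset (Fin n)).Nonempty := ⟨⟨0, hn⟩, Finset.mem_univ _⟩
  have hy : ∀ i, c ≤ x i / B' + 0.5 ∧ x i / B' + 0.5 ≤ 1 - c := by
    intro i
    obtain ⟨h1, h2⟩ := hx i
    have ha : x i / B' ≤ B / B' := (div_le_div_iff_of_pos_right hB'pos).mpr h2
    have hb : -B / B' ≤ x i / B' := (div_le_div_iff_of_pos_right hB'pos).mpr h1
    rw [hBB'] at ha
    rw [neg_div, hBB'] at hb
    constructor <;> [nlinarith; nlinarith]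
  have herr := approxMax_err α hα m hm n hn (fun i => x i / B' + 0.5) hne hy
  have hsupy : Finset.univ.sup' hne (fun i => x i / B' + 0.5) =
      Finset.univ.sup' hne x / B' + 0.5 := by
    have := Finset.comp_sup'_eq_sup'_comp (s := Finset.univ) hne (f := x)
      (fun t => t / B' + 0.5)
      (fun a b => by
        rcases le_total a b with h | h
        · have h' : a / B' + 0.5 ≤ b / B' + 0.5 := by
            have := (div_le_div_iff_of_pos_right hB'pos).mpr h
            linarith
          rw [max_eq_right h, max_eq_right h']
        · have h' : b / B' + 0.5 ≤ a / B' + 0.5 := by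
            have := (div_le_div_iff_of_pos_right hB'pos).mpr h
            linarith
          rw [max_eq_left h, max_eq_left h'])
    rw [show (fun i => x i / B' + 0.5) = ((fun t => t / B' + 0.5) ∘ x) from rfl, ← this]
  set S := Finset.univ.sup' hne x with hS
  have hrw : B' * (approxMax m n (fun i => x i / B' + 0.5) - 0.5) - S =
      B' * (approxMax m n (fun i => x i / B' + 0.5) -
        Finset.univ.sup' hne (fun i => x i / B' + 0.5)) := by
    rw [hsupy]
    field_simp
    ring
  calc |B' * (approxMax m n (fun i => x i / B' + 0.5) - 0.5) - S|
      = B' * |approxMax m n (fun i => x i / B' + 0.5) -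
          Finset.univ.sup' hne (fun i => x i / B' + 0.5)| := by
        rw [hrw, abs_mul, abs_of_pos hB'pos]
    _ ≤ B' * ((Nat.clog 2 n : ℝ) * 2 ^ (-α)) := by
        exact mul_le_mul_of_nonneg_left herr hB'pos.le
    _ = B' * 2 ^ (-α) * (Nat.clog 2 n : ℝ) := by ring
end

section
/- Let B > 0 and let n_0, n_1, …, n_{N+1} be natural numbers. For each 0 ≤ i ≤ N, let A_i : ℝ^{n_i} → ℝ^{n_{i+1}} and A_i^α : ℝ^{n_i} → ℝ^{n_{i+1}} be functions, and let E_i : [0,∞) → [0,∞) be a non-decreasing function such that for all x, e ∈ ℝ^{n_i} and t ≥ 0 with ‖x + e‖∞ ≤ B and ‖e‖∞ ≤ t, one has ‖A_i^α(x + e) − A_i(x)‖∞ ≤ E_i(t). Assume moreover that for every input x with ‖x‖∞ ≤ B and every 0 ≤ i ≤ N−1, ‖(A_i ∘ ⋯ ∘ A_0)(x)‖∞ ≤ B and ‖(A_i^α ∘ ⋯ ∘ A_0^α)(x)‖∞ ≤ B. Then for every x with ‖x‖∞ ≤ B, ‖(A_N^α ∘ ⋯ ∘ A_0^α)(x) −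 (A_N ∘ ⋯ ∘ A_0)(x)‖∞ ≤ (E_N ∘ E_{N−1} ∘ ⋯ ∘ E_0)(0). -/
/-- The composition `A_i ∘ A_{i-1} ∘ ⋯ ∘ A_0` of a sequence of blocks
`A_i : ℝ^{d i} → ℝ^{d (i+1)}`. -/
def blockComp (d : ℕ → ℕ) (A : ∀ i : ℕ, (Fin (d i) → ℝ) → (Fin (d (i + 1)) → ℝ)) :
    (i : ℕ) → (Fin (d 0) → ℝ) → (Fin (d (i + 1)) → ℝ)
  | 0, x => A 0 x
  | (i + 1), x => A (i + 1) (blockComp d A i x)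

/-- The composition `E_i ∘ E_{i-1} ∘ ⋯ ∘ E_0` of error propagation functions. -/
def errComp (E : ℕ → ℝ → ℝ) : ℕ → ℝ → ℝ
  | 0, t => E 0 t
  | (i + 1), t => E (i + 1) (errComp E i t)

/-- Error propagation through a composition of blocks:
if each approximate block `Aα i` admits the non-decreasing error propagation
function `E i` on the ∞-ball of radius `B`, and all intermediate outputs of both
the exact and approximate models stay in that ball, then the final outputs of the
approximate and exact models differ (in ∞-norm) by at most
`(E_N ∘ ⋯ ∘ E_0)(0)`. -/
theorem inference_error_le_errComp (B : ℝ) (hB : 0 < B) (N : ℕ) (d : ℕ → ℕ)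
    (A Aα : ∀ i : ℕ, (Fin (d i) → ℝ) → (Fin (d (i + 1)) → ℝ))
    (E : ℕ → ℝ → ℝ)
    (hE_nonneg : ∀ i ≤ N, ∀ t : ℝ, 0 ≤ t → 0 ≤ E i t)
    (hE_mono : ∀ i ≤ N, ∀ s t : ℝ, 0 ≤ s → s ≤ t → E i s ≤ E i t)
    (hE : ∀ i ≤ N, ∀ (x e : Fin (d i) → ℝ) (t : ℝ), 0 ≤ t →
      ‖x + e‖ ≤ B → ‖e‖ ≤ t → ‖Aα i (x + e) - A i x‖ ≤ E i t)
    (hbound : ∀ x : Fin (d 0) → ℝ, ‖x‖ ≤ B → ∀ i : ℕ, i + 1 ≤ N →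
      ‖blockComp d A i x‖ ≤ B ∧ ‖blockComp d Aα i x‖ ≤ B)
    (x : Fin (d 0) → ℝ) (hx : ‖x‖ ≤ B) :
    ‖blockComp d Aα N x - blockComp d A N x‖ ≤ errComp E N 0 := by
  suffices h : ∀ i, i ≤ N →
      ‖blockComp d Aα i x - blockComp d A i x‖ ≤ errComp E i 0 ∧ 0 ≤ errComp E i 0 from
    (h N le_rfl).1
  intro i
  induction i with
  | zero =>
    intro hi
    constructor
    · have := hE 0 hi x 0 0 le_rfl (by simpa using hx) (by simp)
      simpa [blockComp, errComp] using this
    · exact hE_nonneg 0 hi 0 le_rfl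
  | succ i ih =>
    intro hi
    obtain ⟨h1, h2⟩ := ih (Nat.le_of_succ_le hi)
    have hyα : ‖blockComp d Aα i x‖ ≤ B := (hbound x hx i hi).2
    have key := hE (i + 1) hi (blockComp d A i x)
      (blockComp d Aα i x - blockComp d A i x) (errComp E i 0) h2
      (by rwa [add_sub_cancel]) h1
    rw [add_sub_cancel] at key
    exact ⟨key, hE_nonneg (i + 1) hi _ h2⟩
end

section
/- Let α ≥ 4 be a real number, let k_0 be a natural number with 1 ≤ k_0 ≤ 10, set n = k_0², and let B > 0. Let m : ℝ → ℝ → ℝ satisfy |m(a,b) − max(a,b)| ≤ 2^{−α} for all a, b ∈ [0,1], let M_n be defined from m by the binary recursion, and set B' = B / (0.5 − (⌈log₂ n⌉ − 1)·2^{−α}) and M̃(x_1,…,x_n) = B'·(M_n(x_1/B' + 0.5, …, x_n/B' + 0.5) − 0.5). Then (⌈log₂ k_0²⌉ − 1)·2^{−α} < 0.4, hence B' < 10B, and for all x, e ∈ ℝⁿ and t ≥ 0 with ‖x + e‖∞ ≤ B and ‖e‖∞ ≤ t, |M̃(x + e) − max(x_1,…,x_n)| ≤ 10B·⌈log₂ k_0²⌉·2^{−α}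 + t. -/
lemma approxMax_close (m : ℝ → ℝ → ℝ) (ε : ℝ) (hε : 0 ≤ ε)
    (hm : ∀ a b : ℝ, a ∈ Set.Icc (0:ℝ) 1 → b ∈ Set.Icc (0:ℝ) 1 → |m a b - max a b| ≤ ε) :
    ∀ (n : ℕ) (lo hi : ℝ) (x : Fin n → ℝ)
      (hne : (Finset.univ : Finset (Fin n)).Nonempty),
      (∀ i, lo ≤ x i ∧ x i ≤ hi) →
      0 ≤ lo - ((Nat.clog 2 n : ℝ) - 1) * ε →
      hi + ((Nat.clog 2 n : ℝ) - 1) * ε ≤ 1 →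
      |approxMax m n x - Finset.univ.sup' hne x| ≤ (Nat.clog 2 n : ℝ) * ε := by
  intro n
  induction n using Nat.strong_induction_on with
  | _ n ih =>
  match n with
  | 0 => intro lo hi x hne; exact absurd hne.choose.2 (by omega)
  | 1 =>
    intro lo hi x hne hx h1 h2
    have hs : Finset.univ.sup' hne x = x 0 :=
      le_antisymm (Finset.sup'_le _ _ fun i _ => by rw [Subsingleton.elim i 0])
        (Finset.le_sup' _ (Finset.mem_univ 0))
    simp [approxMax, hs, Nat.clog_one_right]
  | (N + 2) =>
    intro lo hi x hne hx h1 h2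
    set k := (N + 2) / 2 with hk
    have hk1 : 0 < k := by omega
    have hk2 : 0 < N + 2 - k := by omega
    have hklt : k < N + 2 := by omega
    have hk2lt : N + 2 - k < N + 2 := by omega
    have hclog : Nat.clog 2 (N + 2) = Nat.clog 2 (N + 2 - k) + 1 := by
      rw [Nat.clog_of_two_le one_lt_two (by omega)]
      congr 2
      omega
    have hc1N : Nat.clog 2 k + 1 ≤ Nat.clog 2 (N + 2) := by
      have := Nat.clog_mono_right 2 (show k ≤ N + 2 - k by omega)
      omega
    have hc1R : (Nat.clog 2 k : ℝ) ≤ (Nat.clog 2 (N + 2) : ℝ) - 1 := by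
      have h := (Nat.cast_le (α := ℝ)).mpr hc1N
      push_cast at h; linarith
    have hc2R : (Nat.clog 2 (N + 2 - k) : ℝ) ≤ (Nat.clog 2 (N + 2) : ℝ) - 1 := by
      have h := (Nat.cast_le (α := ℝ)).mpr (show Nat.clog 2 (N+2-k) + 1 ≤ Nat.clog 2 (N+2) by omega)
      push_cast at h; linarith
    have m1 : (Nat.clog 2 k : ℝ) * ε ≤ ((Nat.clog 2 (N+2) : ℝ) - 1) * ε :=
      mul_le_mul_of_nonneg_right hc1R hε
    have m2 : (Nat.clog 2 (N+2-k) : ℝ) * ε ≤ ((Nat.clog 2 (N+2) : ℝ) - 1) * ε :=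
      mul_le_mul_of_nonneg_right hc2R hε
    have m1' : ((Nat.clog 2 k : ℝ) - 1) * ε ≤ ((Nat.clog 2 (N+2) : ℝ) - 1) * ε :=
      mul_le_mul_of_nonneg_right (by linarith) hε
    have m2' : ((Nat.clog 2 (N+2-k) : ℝ) - 1) * ε ≤ ((Nat.clog 2 (N+2) : ℝ) - 1) * ε :=
      mul_le_mul_of_nonneg_right (by linarith) hε
    set x₁ : Fin k → ℝ := fun i => x ⟨i.val, by omega⟩ with hx₁
    set x₂ : Fin (N + 2 - k) → ℝ := fun i => x ⟨k + i.val, by omega⟩ with hx₂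
    have ne1 : (Finset.univ : Finset (Fin k)).Nonempty := ⟨⟨0, hk1⟩, Finset.mem_univ _⟩
    have ne2 : (Finset.univ : Finset (Fin (N + 2 - k))).Nonempty := ⟨⟨0, hk2⟩, Finset.mem_univ _⟩
    have hbx₁ : ∀ i, lo ≤ x₁ i ∧ x₁ i ≤ hi := by intro i; rw [hx₁]; exact hx _
    have hbx₂ : ∀ i, lo ≤ x₂ i ∧ x₂ i ≤ hi := by intro i; rw [hx₂]; exact hx _
    have H1 := ih k hklt lo hi x₁ ne1 hbx₁ (by linarith) (by linarith)
    have H2 := ih (N + 2 - k) hk2lt lo hi x₂ ne2 hbx₂ (by linarith) (by linarith)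
    set s₁ := Finset.univ.sup' ne1 x₁ with hs₁
    set s₂ := Finset.univ.sup' ne2 x₂ with hs₂
    set v₁ := approxMax m k x₁ with hv₁d
    set v₂ := approxMax m (N + 2 - k) x₂ with hv₂d
    have hs₁lo : lo ≤ s₁ := le_trans (hbx₁ ⟨0, hk1⟩).1 (Finset.le_sup' x₁ (Finset.mem_univ _))
    have hs₁hi : s₁ ≤ hi := Finset.sup'_le _ _ fun i _ => (hbx₁ _).2
    have hs₂lo : lo ≤ s₂ := le_trans (hbx₂ ⟨0, hk2⟩).1 (Finset.le_sup' x₂ (Finset.mem_univ _))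
    have hs₂hi : s₂ ≤ hi := Finset.sup'_le _ _ fun i _ => (hbx₂ _).2
    have A1 := abs_le.mp H1
    have A2 := abs_le.mp H2
    have hv₁ : v₁ ∈ Set.Icc (0:ℝ) 1 := ⟨by linarith [A1.1], by linarith [A1.2]⟩
    have hv₂ : v₂ ∈ Set.Icc (0:ℝ) 1 := ⟨by linarith [A2.1], by linarith [A2.2]⟩
    have hsup : Finset.univ.sup' hne x = max s₁ s₂ := by
      apply le_antisymm
      · apply Finset.sup'_le
        intro i _
        by_cases hik : i.val < k
        · refine le_max_of_le_left ?_
          have h : x₁ ⟨i.val, hik⟩ ≤ s₁ := Finset.le_sup' x₁ (Finset.mem_univ _)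
          have he : x₁ ⟨i.val, hik⟩ = x i := by
            rw [hx₁]
          rwa [he] at h
        · refine le_max_of_le_right ?_
          have h : x₂ ⟨i.val - k, by omega⟩ ≤ s₂ := Finset.le_sup' x₂ (Finset.mem_univ _)
          have he : x₂ ⟨i.val - k, by omega⟩ = x i := by
            rw [hx₂]; exact congrArg x (Fin.ext (by simp; omega))
          rwa [he] at h
      · apply max_le
        · rw [hs₁]
          apply Finset.sup'_le
          intro j _
          rw [hx₁]
          exact Finset.le_sup' x (Finset.mem_univ _)
        · rw [hs₂]
          apply Finset.sup'_le
          intro j _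
          rw [hx₂]
          exact Finset.le_sup' x (Finset.mem_univ _)
    have hunfold : approxMax m (N + 2) x = m v₁ v₂ := by
      rw [approxMax]
    have hmv := hm v₁ v₂ hv₁ hv₂
    have hmax : |max v₁ v₂ - max s₁ s₂| ≤ ((Nat.clog 2 (N+2) : ℝ) - 1) * ε :=
      le_trans (abs_max_sub_max_le_max _ _ _ _)
        (max_le (le_trans H1 m1) (le_trans H2 m2))
    rw [hunfold, hsup]
    calc |m v₁ v₂ - max s₁ s₂| ≤ |m v₁ v₂ - max v₁ v₂| + |max v₁ v₂ - max s₁ s₂| :=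
          abs_sub_le _ _ _
      _ ≤ ε + ((Nat.clog 2 (N+2) : ℝ) - 1) * ε := add_le_add hmv hmax
      _ ≤ (Nat.clog 2 (N+2) : ℝ) * ε := by ring_nf; linarith

/-- Error propagation through a max-pooling block with kernel size `k₀ ≤ 10`
(`n = k₀²` inputs) and precision parameter `α ≥ 4`: the rescaling constant
satisfies `(⌈log₂ k₀²⌉ − 1)·2^(-α) < 0.4`, hence `B' < 10B`, and the
approximate max-pooling `M̃(x) = B'·(M_n(x/B' + 0.5) − 0.5)` satisfies
`|M̃(x+e) − max_i x_i| ≤ 10B·⌈log₂ k₀²⌉·2^(-α) + t` whenever `‖x+e‖∞ ≤ B` and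
`‖e‖∞ ≤ t`. -/
theorem maxpool_block_error (α : ℝ) (hα : 4 ≤ α) (k₀ : ℕ) (hk₀ : 1 ≤ k₀)
    (hk₀' : k₀ ≤ 10) (n : ℕ) (hn : n = k₀ ^ 2) (B : ℝ) (hB : 0 < B)
    (m : ℝ → ℝ → ℝ)
    (hm : ∀ a b : ℝ, a ∈ Set.Icc (0 : ℝ) 1 → b ∈ Set.Icc (0 : ℝ) 1 →
      |m a b - max a b| ≤ 2 ^ (-α))
    (B' : ℝ) (hB' : B' = B / (0.5 - ((Nat.clog 2 n : ℝ) - 1) * 2 ^ (-α))) :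
    ((Nat.clog 2 (k₀ ^ 2) : ℝ) - 1) * 2 ^ (-α) < 0.4 ∧ B' < 10 * B ∧
      ∀ (x e : Fin n → ℝ) (t : ℝ), 0 ≤ t → ‖x + e‖ ≤ B → ‖e‖ ≤ t →
        |B' * (approxMax m n (fun i => (x + e) i / B' + 0.5) - 0.5) -
            Finset.univ.sup' ⟨⟨0, by rw [hn]; positivity⟩, Finset.mem_univ _⟩ x| ≤
          10 * B * (Nat.clog 2 (k₀ ^ 2) : ℝ) * 2 ^ (-α) + t := by
  subst hn
  set ε : ℝ := 2 ^ (-α) with hεd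
  have hε0 : 0 < ε := Real.rpow_pos_of_pos two_pos _
  have hε16 : ε ≤ 1 / 16 := by
    have h1 : (2:ℝ) ^ (-α) ≤ (2:ℝ) ^ (-(4:ℝ)) :=
      Real.rpow_le_rpow_of_exponent_le one_le_two (by linarith)
    have h2 : (2:ℝ) ^ (-(4:ℝ)) = 1 / 16 := by
      rw [Real.rpow_neg (by norm_num : (0:ℝ) ≤ 2),
        show (4:ℝ) = ((4:ℕ):ℝ) by norm_num, Real.rpow_natCast]
      norm_num
    rw [hεd]; exact h1.trans_eq h2
  set L := Nat.clog 2 (k₀ ^ 2) with hLd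
  have hL7 : L ≤ 7 := by
    have h1 : Nat.clog 2 (k₀ ^ 2) ≤ Nat.clog 2 (2 ^ 7) :=
      Nat.clog_mono_right 2 (by nlinarith)
    rwa [Nat.clog_pow 2 7 one_lt_two] at h1
  have hLR : (L : ℝ) ≤ 7 := by exact_mod_cast hL7
  have hL0 : (0:ℝ) ≤ (L : ℝ) := Nat.cast_nonneg _
  have key6 : ((L:ℝ) - 1) * ε ≤ 6 * ε :=
    mul_le_mul_of_nonneg_right (by linarith) hε0.le
  have part1 : ((L:ℝ) - 1) * ε < 0.4 := by nlinarith
  set d : ℝ := 0.5 - ((L:ℝ) - 1) * ε with hdd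
  clear_value L
  have hd1 : 0.1 < d := by rw [hdd]; nlinarith
  clear_value d
  have hd0 : 0 < d := lt_trans (by norm_num : (0:ℝ) < 0.1) hd1
  have hB'd : B' = B / d := hB'
  have hB'0 : 0 < B' := by rw [hB'd]; positivity
  have part2 : B' < 10 * B := by
    rw [hB'd, div_lt_iff₀ hd0]
    nlinarith
  refine ⟨part1, part2, ?_⟩
  intro x e t ht hxB het
  have ne : (Finset.univ : Finset (Fin (k₀ ^ 2))).Nonempty :=
    ⟨⟨0, by positivity⟩, Finset.mem_univ _⟩
  have hBB' : B / B' = d := by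
    rw [hB'd]; field_simp
  set y : Fin (k₀ ^ 2) → ℝ := fun i => (x + e) i / B' + 0.5 with hyd
  have hybound : ∀ i, 0.5 - d ≤ y i ∧ y i ≤ 0.5 + d := by
    intro i
    have h1 : |(x + e) i| ≤ B := by
      have := norm_le_pi_norm (x + e) i
      rw [Real.norm_eq_abs] at this
      linarith
    have h2 : |(x + e) i / B'| ≤ d := by
      rw [abs_div, abs_of_pos hB'0, div_le_iff₀ hB'0]
      rw [← hBB', div_mul_cancel₀ _ hB'0.ne'] at *
      exact h1
    have := abs_le.mp h2
    constructor <;> simp only [hyd] <;> linarith [this.1, this.2]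
  have Hclose := approxMax_close m ε hε0.le hm (k₀ ^ 2) (0.5 - d) (0.5 + d) y ne
    hybound (by rw [hdd, ← hLd]; ring_nf; norm_num) (by rw [hdd, ← hLd]; ring_nf; norm_num)
  rw [← hLd] at Hclose
  set Se := Finset.univ.sup' ne (x + e) with hSe
  set Sx := Finset.univ.sup' ne x with hSx
  have hsupy : Finset.univ.sup' ne y = Se / B' + 0.5 := by
    apply le_antisymm
    · apply Finset.sup'_le
      intro i _
      show (x + e) i / B' + 0.5 ≤ Se / B' + 0.5
      have h : (x + e) i ≤ Se := by rw [hSe]; exact Finset.le_sup' _ (Finset.mem_univ i)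
      gcongr
    · obtain ⟨j, _, hj⟩ := Finset.exists_mem_eq_sup' ne (x + e)
      rw [← hSe] at hj
      rw [hj]
      exact Finset.le_sup' y (Finset.mem_univ j)
  have hebound : ∀ i, |e i| ≤ t := by
    intro i
    have h := norm_le_pi_norm e i
    rw [Real.norm_eq_abs] at h
    linarith
  have hs1 : Se ≤ Sx + t := by
    apply Finset.sup'_le
    intro i _
    have h1 : x i ≤ Sx := Finset.le_sup' x (Finset.mem_univ i)
    have h2 := abs_le.mp (hebound i)
    have : (x + e) i = x i + e i := rfl
    rw [this]
    linarith [h2.1, h2.2]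
  have hs2 : Sx ≤ Se + t := by
    apply Finset.sup'_le
    intro i _
    have h1 : (x + e) i ≤ Se := Finset.le_sup' (x + e) (Finset.mem_univ i)
    have h2 := abs_le.mp (hebound i)
    have h3 : (x + e) i = x i + e i := rfl
    rw [h3] at h1
    linarith [h2.1, h2.2]
  rw [hsupy] at Hclose
  set M := approxMax m (k₀ ^ 2) y with hM
  have hrw : B' * (M - 0.5) - Sx = B' * (M - (Se / B' + 0.5)) + (Se - Sx) := by
    field_simp
    ring
  have habs1 : |B' * (M - (Se / B' + 0.5))| ≤ B' * ((L:ℝ) * ε) := by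
    rw [abs_mul, abs_of_pos hB'0]
    exact mul_le_mul_of_nonneg_left Hclose hB'0.le
  have habs2 : |Se - Sx| ≤ t := abs_le.mpr ⟨by linarith, by linarith⟩
  have hfin : B' * ((L:ℝ) * ε) ≤ 10 * B * (L:ℝ) * ε := by
    have h1 : (0:ℝ) ≤ (L:ℝ) * ε := by positivity
    calc B' * ((L:ℝ) * ε) ≤ (10 * B) * ((L:ℝ) * ε) :=
          mul_le_mul_of_nonneg_right part2.le h1
      _ = 10 * B * (L:ℝ) * ε := by ring
  calc |B' * (M - 0.5) - Sx|
      = |B' * (M - (Se / B' + 0.5)) + (Se - Sx)| := by rw [hrw]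
    _ ≤ |B' * (M - (Se / B' + 0.5))| + |Se - Sx| := abs_add_le _ _
    _ ≤ 10 * B * (L:ℝ) * ε + t := by linarith
end

section
/- Let N ≥ 1 and define softmax : ℝ^N → ℝ^N by softmax(x)_i = exp(x_i) / Σ_j exp(x_j). Then for all x, y ∈ ℝ^N, ‖softmax(x) − softmax(y)‖∞ ≤ (1/2)·‖x − y‖∞; that is, the softmax function is 1/2-Lipschitz with respect to the ∞-norm. -/
/-- The softmax function on `ℝ^N`: `softmax(x)_i = exp(x_i) / Σ_j exp(x_j)`. -/
noncomputable def softmax (N : ℕ) (x : Fin N → ℝ) : Fin N → ℝ :=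
  fun i => Real.exp (x i) / ∑ j : Fin N, Real.exp (x j)

/-- Key algebraic bound: if `s` is a probability vector and `|d j| ≤ M`, then
`s i * |d i - ∑ s j * d j| ≤ M / 2`. -/
lemma softmax_deriv_bound {N : ℕ} (s d : Fin N → ℝ) (M : ℝ) (hM : 0 ≤ M)
    (hs : ∀ j, 0 ≤ s j) (hsum : ∑ j, s j = 1) (hd : ∀ j, |d j| ≤ M) (i : Fin N) :
    s i * |d i - ∑ j, s j * d j| ≤ M / 2 := by
  have h1 : d i - ∑ j, s j * d j = ∑ j, s j * (d i - d j) := by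
    simp [mul_sub, Finset.sum_sub_distrib, ← Finset.sum_mul, hsum]
  have h2 : |d i - ∑ j, s j * d j| ≤ (1 - s i) * (2 * M) := by
    rw [h1]
    calc |∑ j, s j * (d i - d j)| ≤ ∑ j, |s j * (d i - d j)| := Finset.abs_sum_le_sum_abs _ _
      _ = ∑ j, s j * |d i - d j| := by
          refine Finset.sum_congr rfl fun j _ => ?_
          rw [abs_mul, abs_of_nonneg (hs j)]
      _ = ∑ j ∈ Finset.univ.erase i, s j * |d i - d j| := by
          rw [← Finset.sum_erase]
          simp
      _ ≤ ∑ j ∈ Finset.univ.erase i, s j * (2 * M) := by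
          refine Finset.sum_le_sum fun j _ => ?_
          refine mul_le_mul_of_nonneg_left ?_ (hs j)
          calc |d i - d j| ≤ |d i| + |d j| := abs_sub _ _
            _ ≤ M + M := add_le_add (hd i) (hd j)
            _ = 2 * M := by ring
      _ = (1 - s i) * (2 * M) := by
          rw [← Finset.sum_mul]
          congr 1
          rw [Finset.sum_erase_eq_sub (Finset.mem_univ i), hsum]
  have hsi := hs i
  have hsile : s i ≤ 1 := by
    rw [← hsum]
    exact Finset.single_le_sum (fun j _ => hs j) (Finset.mem_univ i)
  calc s i * |d i - ∑ j, s j * d j| ≤ s i * ((1 - s i) * (2 * M)) :=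
        mul_le_mul_of_nonneg_left h2 hsi
    _ ≤ M / 2 := by nlinarith [sq_nonneg (s i - 1/2)]

/-- The softmax function is `1/2`-Lipschitz with respect to the ∞-norm:
`‖softmax(x) − softmax(y)‖∞ ≤ (1/2)·‖x − y‖∞`. -/
theorem softmax_half_lipschitz (N : ℕ) (hN : 1 ≤ N) (x y : Fin N → ℝ) :
    ‖softmax N x - softmax N y‖ ≤ (1 / 2) * ‖x - y‖ := by
  have hne : Nonempty (Fin N) := Fin.pos_iff_nonempty.mp hN
  set M := ‖x - y‖ with hMdef
  have hM : 0 ≤ M := norm_nonneg _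
  have hhalf : 0 ≤ (1:ℝ)/2 * M := by positivity
  rw [pi_norm_le_iff_of_nonneg hhalf]
  intro i
  set d : Fin N → ℝ := fun j => y j - x j with hd
  have hdle : ∀ j, |d j| ≤ M := by
    intro j
    have := norm_le_pi_norm (x - y) j
    simp only [Pi.sub_apply, Real.norm_eq_abs] at this
    rw [hd]
    simpa [abs_sub_comm] using this
  -- the path
  set E : ℝ → Fin N → ℝ := fun t j => Real.exp (x j + t * d j) with hE
  set S : ℝ → ℝ := fun t => ∑ j, E t j with hS
  have hSpos : ∀ t, 0 < S t := fun t =>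
    Finset.sum_pos (fun j _ => Real.exp_pos _) Finset.univ_nonempty
  set g : ℝ → ℝ := fun t => E t i / S t with hg
  set g' : ℝ → ℝ := fun t =>
    (d i * E t i * S t - E t i * ∑ j, d j * E t j) / (S t) ^ 2 with hg'
  have hderiv : ∀ t : ℝ, HasDerivAt g (g' t) t := by
    intro t
    have hnum : HasDerivAt (fun t => E t i) (d i * E t i) t := by
      have h1 : HasDerivAt (fun t : ℝ => x i + t * d i) (d i) t := by
        simpa using (hasDerivAt_mul_const (d i)).const_add (x i)
      simpa [hE, mul_comm] using h1.exp
    have hden : HasDerivAt S (∑ j, d j * E t j) t := by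
      rw [hS]
      refine HasDerivAt.fun_sum fun j _ => ?_
      have h1 : HasDerivAt (fun t : ℝ => x j + t * d j) (d j) t := by
        simpa using (hasDerivAt_mul_const (d j)).const_add (x j)
      simpa [hE, mul_comm] using h1.exp
    exact hnum.div hden (hSpos t).ne'
  have hbound : ∀ t : ℝ, |g' t| ≤ M / 2 := by
    intro t
    have hS0 := hSpos t
    have key : g' t = (E t i / S t) * (d i - ∑ j, (E t j / S t) * d j) := by
      rw [hg']
      have hsum2 : ∑ j, (E t j / S t) * d j = (∑ j, d j * E t j) / S t := by
        rw [Finset.sum_div]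
        exact Finset.sum_congr rfl fun j _ => by ring
      rw [hsum2]
      field_simp
    rw [key, abs_mul, abs_of_nonneg (div_nonneg (Real.exp_pos _).le hS0.le)]
    refine softmax_deriv_bound (fun j => E t j / S t) d M hM
      (fun j => div_nonneg (Real.exp_pos _).le hS0.le) ?_ hdle i
    rw [← Finset.sum_div, div_self hS0.ne']
  have hmvt : ‖g 1 - g 0‖ ≤ M / 2 * ‖(1:ℝ) - 0‖ := by
    refine Convex.norm_image_sub_le_of_norm_hasDerivWithin_le
      (f' := g') (s := Set.univ) (fun t _ => (hderiv t).hasDerivWithinAt)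
      (fun t _ => by simpa [Real.norm_eq_abs] using hbound t)
      convex_univ (Set.mem_univ _) (Set.mem_univ _)
  have hg1 : g 1 = softmax N y i := by
    simp [hg, hE, hS, softmax, hd]
  have hg0 : g 0 = softmax N x i := by
    simp [hg, hE, hS, softmax]
  have : |softmax N y i - softmax N x i| ≤ M / 2 := by
    rw [← hg1, ← hg0]
    simpa using hmvt
  simp only [Pi.sub_apply, Real.norm_eq_abs]
  rw [abs_sub_comm]
  linarith
end
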